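/- arXiv:1706.05728 — 3 statements merged into one kernel-verified Lean document; each statement's English description precedes it below -/
import Mathlib

section
/- For integers n ≥ 1 and m ≥ 1, the coefficients E_{n,m} of z^n in Ein(z)^m satisfy |n! · E_{n,m}| ≤ m^n. -/
open MeasureTheory

/-- `Ein z = ∫_0^z (1 - e^{-t})/t dt`, parametrized along the segment `t = r z`. -/
noncomputable def Ein (z : ℂ) : ℂ := ∫ r in (0:ℝ)..1, (1 - Complex.exp (-((r : ℂ) * z))) / (r : ℂ)
noncomputable def EinCoeff (n m : ℕ) : ℂ :=
  iteratedDeriv n (fun z => Ein z ^ m) 0 / (n.factorial : ℂ)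

/-!
Integrating the exponential series term by term gives the everywhere convergent expansion
`Ein z = ∑_{k ≥ 1} (-1)^(k+1) z^k / (k k!)`, so `Ein` is entire with this Taylor series `EinPS`,
and by the Leibniz rule the Taylor series of `Ein^m` at `0` is `EinPS^m`, whose `n`-th coefficient
is `E_{n,m}`. Each coefficient of `EinPS` is bounded in norm by the coefficient `1/k!` of `e^X`;
such coefficientwise majorants multiply, so `|E_{n,m}| ≤ [X^n] e^(mX) = m^n / n!`.
-/

open PowerSeries
open scoped ContDiff

section Majorant

variable {R : Type*} [SeminormedRing R]

theorem PowerSeries.norm_coeff_mul_le {f f' : R⟦X⟧} {g g' : ℝ⟦X⟧}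
    (hf : ∀ k, ‖coeff k f‖ ≤ coeff k g) (hf' : ∀ k, ‖coeff k f'‖ ≤ coeff k g') (n : ℕ) :
    ‖coeff n (f * f')‖ ≤ coeff n (g * g') := by
  rw [coeff_mul, coeff_mul]
  refine (norm_sum_le _ _).trans (Finset.sum_le_sum fun p _ => ?_)
  exact (norm_mul_le _ _).trans
    (mul_le_mul (hf p.1) (hf' p.2) (norm_nonneg _) ((norm_nonneg _).trans (hf p.1)))

theorem PowerSeries.norm_coeff_pow_le [NormOneClass R] {f : R⟦X⟧} {g : ℝ⟦X⟧}
    (hf : ∀ k, ‖coeff k f‖ ≤ coeff k g) (m n : ℕ) :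
    ‖coeff n (f ^ m)‖ ≤ coeff n (g ^ m) := by
  induction m generalizing n with
  | zero => rw [pow_zero, pow_zero, coeff_one, coeff_one]; split_ifs <;> simp
  | succ m ih => rw [pow_succ, pow_succ]; exact norm_coeff_mul_le ih hf n

theorem PowerSeries.coeff_exp_pow (m n : ℕ) :
    coeff n (exp ℝ ^ m) = (m : ℝ) ^ n / n.factorial := by
  rw [exp_pow_eq_rescale_exp, coeff_rescale, coeff_exp]
  simp [div_eq_mul_inv]

end Majorant

section Taylor

variable {𝕜 : Type*} [NontriviallyNormedField 𝕜]

noncomputable def taylorSeries (f : 𝕜 → 𝕜) (x : 𝕜) : 𝕜⟦X⟧ :=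
  PowerSeries.mk fun n => iteratedDeriv n f x / n.factorial

theorem coeff_taylorSeries (f : 𝕜 → 𝕜) (x : 𝕜) (n : ℕ) :
    coeff n (taylorSeries f x) = iteratedDeriv n f x / n.factorial :=
  coeff_mk _ _

variable [CharZero 𝕜] {f g : 𝕜 → 𝕜} {x : 𝕜}

theorem taylorSeries_mul (hf : ContDiffAt 𝕜 ∞ f x) (hg : ContDiffAt 𝕜 ∞ g x) :
    taylorSeries (f * g) x = taylorSeries f x * taylorSeries g x := by
  ext n
  simp only [coeff_taylorSeries, iteratedDeriv_mul (hf.of_le (by exact_mod_cast le_top))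
    (hg.of_le (by exact_mod_cast le_top)), Finset.sum_div, coeff_mul,
    Finset.Nat.sum_antidiagonal_eq_sum_range_succ_mk]
  refine Finset.sum_congr rfl fun i hi => ?_
  rw [Nat.cast_choose _ (by grind)]
  field_simp [Nat.factorial_ne_zero]

theorem taylorSeries_pow (hf : ContDiffAt 𝕜 ∞ f x) (m : ℕ) :
    taylorSeries (fun y => f y ^ m) x = taylorSeries f x ^ m := by
  induction m with
  | zero =>
    ext n
    simp only [pow_zero, coeff_taylorSeries, coeff_one, iteratedDeriv_const]
    split_ifs with hn <;> simp [hn]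
  | succ m ih =>
    rw [show (fun y => f y ^ (m + 1)) = (fun y => f y ^ m) * f from funext fun y => pow_succ _ _,
      taylorSeries_mul (hf.pow m) hf, ih, pow_succ]

theorem HasFPowerSeriesAt.taylorSeries_eq [CompleteSpace 𝕜] {c : ℕ → 𝕜}
    (hf : HasFPowerSeriesAt f (FormalMultilinearSeries.ofScalars 𝕜 c) x) :
    taylorSeries f x = PowerSeries.mk c := by
  ext n
  have := congrArg (·.coeff n) (hf.analyticAt.hasFPowerSeriesAt.eq_formalMultilinearSeries hf)
  simpa [FormalMultilinearSeries.coeff_ofScalars, coeff_taylorSeries] using this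

end Taylor

theorem FormalMultilinearSeries.hasFPowerSeriesOnBall_ofScalars_of_hasSum {𝕜 : Type*} [RCLike 𝕜]
    {f : 𝕜 → 𝕜} {c : ℕ → 𝕜} (hf : ∀ z, HasSum (fun n => c n * z ^ n) (f z)) :
    HasFPowerSeriesOnBall f (ofScalars 𝕜 c) 0 ⊤ where
  r_le := by
    refine ENNReal.le_of_forall_nnreal_lt fun r _ => ?_
    refine (ofScalars 𝕜 c).le_radius_of_tendsto (l := 0) ?_
    have := (hf ((r : ℝ) : 𝕜)).summable.tendsto_atTop_zero.norm
    simpa [norm_pow] using this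
  r_pos := ENNReal.zero_lt_top
  hasSum := fun {y} _ => by simpa [ofScalars_apply_eq, mul_comm] using hf y

-- The constant coefficient is `0` because `x / 0 = 0`.
noncomputable def EinPS : ℂ⟦X⟧ :=
  PowerSeries.mk fun k => (-1) ^ (k + 1) / (k * k.factorial)

theorem norm_coeff_EinPS_le (k : ℕ) : ‖coeff k EinPS‖ ≤ coeff k (exp ℝ) := by
  rw [EinPS, coeff_mk, coeff_exp, norm_div, norm_pow, norm_neg, norm_one, one_pow]
  rcases Nat.eq_zero_or_pos k with rfl | hk
  · simp
  · push_cast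
    rw [norm_mul, Complex.norm_natCast, Complex.norm_natCast]
    gcongr
    exact le_mul_of_one_le_left (Nat.cast_nonneg _) (Nat.one_le_cast.2 hk)

theorem hasSum_one_sub_exp_div (z : ℂ) {r : ℝ} (hr : r ≠ 0) :
    HasSum (fun k : ℕ => (-1) ^ k * z ^ (k + 1) / (k + 1).factorial * (r : ℂ) ^ k)
      ((1 - Complex.exp (-(r * z))) / r) := by
  have hexp := NormedSpace.expSeries_div_hasSum_exp (-((r : ℂ) * z))
  rw [← Complex.exp_eq_exp_ℂ, ← hasSum_nat_add_iff' 1] at hexp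
  have hr' : (r : ℂ) ≠ 0 := by exact_mod_cast hr
  have hterm : ∀ k : ℕ, (-1) ^ k * z ^ (k + 1) / (k + 1).factorial * (r : ℂ) ^ k
      = -((-(r * z)) ^ (k + 1) / (k + 1).factorial) / r := fun k => by field_simp; ring
  simp_rw [hterm]
  simpa [neg_sub] using hexp.neg.div_const (r : ℂ)

theorem integral_mul_pow_eq_coeff_EinPS (z : ℂ) (k : ℕ) :
    ∫ r in (0 : ℝ)..1, (-1) ^ k * z ^ (k + 1) / (k + 1).factorial * (r : ℂ) ^ k
      = coeff (k + 1) EinPS * z ^ (k + 1) := by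
  have hpow : ∫ r in (0 : ℝ)..1, (r : ℂ) ^ k = 1 / (k + 1) := by
    simp_rw [← Complex.ofReal_pow, intervalIntegral.integral_ofReal, integral_pow]
    push_cast
    simp
  rw [intervalIntegral.integral_const_mul, hpow, EinPS, coeff_mk]
  push_cast
  field_simp
  ring

theorem hasSum_Ein (z : ℂ) : HasSum (fun k => coeff k EinPS * z ^ k) (Ein z) := by
  set F : ℕ → ℝ → ℂ := fun k r => (-1) ^ k * z ^ (k + 1) / (k + 1).factorial * (r : ℂ) ^ k
  have hF_bound : ∀ k, ∀ r ∈ Set.uIoc (0 : ℝ) 1, ‖F k r‖ ≤ ‖z‖ ^ (k + 1) / (k + 1).factorial := by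
    intro k r hr
    rw [Set.uIoc_of_le zero_le_one] at hr
    have hrk : |r| ^ k ≤ 1 := pow_le_one₀ (abs_nonneg r) (abs_le.2 ⟨by linarith [hr.1], hr.2⟩)
    simpa [F, norm_pow] using mul_le_of_le_one_right (by positivity) hrk
  have hF_lim : ∀ r ∈ Set.uIoc (0 : ℝ) 1,
      HasSum (F · r) ((1 - Complex.exp (-(r * z))) / r) := by
    intro r hr
    rw [Set.uIoc_of_le zero_le_one] at hr
    exact hasSum_one_sub_exp_div z hr.1.ne'
  have hint : HasSum (fun k => ∫ r in (0 : ℝ)..1, F k r)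
      (∫ r in (0 : ℝ)..1, (1 - Complex.exp (-(r * z))) / r) :=
    intervalIntegral.hasSum_integral_of_dominated_convergence
      (fun k _ => ‖z‖ ^ (k + 1) / (k + 1).factorial)
      (fun k => (continuous_const.mul (Complex.continuous_ofReal.pow k)).aestronglyMeasurable)
      (fun k => ae_of_all _ (hF_bound k))
      (ae_of_all _ fun _ _ => (summable_nat_add_iff 1).2 (Real.summable_pow_div_factorial ‖z‖))
      intervalIntegrable_const (ae_of_all _ hF_lim)
  simp only [F, integral_mul_pow_eq_coeff_EinPS] at hint
  rw [← hasSum_nat_add_iff' 1]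
  simpa [EinPS, Ein] using hint

theorem hasFPowerSeriesOnBall_Ein :
    HasFPowerSeriesOnBall Ein (FormalMultilinearSeries.ofScalars ℂ (coeff · EinPS)) 0 ⊤ :=
  FormalMultilinearSeries.hasFPowerSeriesOnBall_ofScalars_of_hasSum hasSum_Ein

theorem taylorSeries_Ein_pow (m : ℕ) :
    taylorSeries (fun z => Ein z ^ m) 0 = EinPS ^ m := by
  rw [taylorSeries_pow hasFPowerSeriesOnBall_Ein.analyticAt.contDiffAt,
    hasFPowerSeriesOnBall_Ein.hasFPowerSeriesAt.taylorSeries_eq]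
  congr 1
  ext n
  exact coeff_mk _ _

theorem norm_coeff_EinPS_pow_le (m n : ℕ) :
    ‖coeff n (EinPS ^ m)‖ ≤ (m : ℝ) ^ n / n.factorial :=
  coeff_exp_pow m n ▸ norm_coeff_pow_le norm_coeff_EinPS_le m n

theorem stmt_2_general (n m : ℕ) :
    ‖(n.factorial : ℂ) * EinCoeff n m‖ ≤ (m : ℝ) ^ n := by
  have hcoeff : EinCoeff n m = coeff n (EinPS ^ m) := by
    rw [← taylorSeries_Ein_pow, coeff_taylorSeries, EinCoeff]
  rw [hcoeff, norm_mul, Complex.norm_natCast]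
  calc (n.factorial : ℝ) * ‖coeff n (EinPS ^ m)‖
      ≤ n.factorial * ((m : ℝ) ^ n / n.factorial) := by
        gcongr
        exact norm_coeff_EinPS_pow_le m n
    _ = (m : ℝ) ^ n := by field_simp

theorem stmt_2 (n m : ℕ) (hn : 1 ≤ n) (hm : 1 ≤ m) :
    ‖(n.factorial : ℂ) * EinCoeff n m‖ ≤ (m : ℝ) ^ n :=
  stmt_2_general n m
end

section
/- For an integer κ ≥ 1, define C_{r,κ} as the r-th Taylor coefficient at 0 of e^{γz}/Γ(κ+1−z). Then for every r ≥ 0, C_{r,κ} = ∑_{j=0}^{r} C_{j,κ−1} / κ^{r−j+1}. -/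
/-- `C r κ` is the `r`-th Taylor coefficient at `0` of `e^{γz}/Γ(κ+1-z)`. -/
noncomputable def genDickmanC (r κ : ℕ) : ℂ :=
  iteratedDeriv r (fun z => Complex.exp ((Real.eulerMascheroniConstant : ℂ) * z) /
    Complex.Gamma ((κ : ℂ) + 1 - z)) 0 / (r.factorial : ℂ)

/-!
Write `f_κ(z) = e^{γz}/Γ(κ+1-z)`. The functional equation `Γ(s+1) = s Γ(s)` gives
`f_κ(z) = (κ+1-z) f_{κ+1}(z)`, and comparing Taylor coefficients at `0` yields
`C_{r+1,κ} = (κ+1) C_{r+1,κ+1} - C_{r,κ+1}` and `C_{0,κ} = (κ+1) C_{0,κ+1}`.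
Solving this first-order recursion for `C_{·,κ+1}` gives the claimed sum.
-/

open Finset
open scoped ContDiff

section ConstSubSmul

variable {𝕜 F : Type*} [NontriviallyNormedField 𝕜] [NormedAddCommGroup F] [NormedSpace 𝕜 F]

theorem deriv_const_sub_smul {g : 𝕜 → F} (hg : Differentiable 𝕜 g) (c : 𝕜) :
    deriv (fun z => (c - z) • g z) = fun z => (c - z) • deriv g z - g z := by
  funext z
  rw [deriv_fun_smul (c := fun y => c - y) ((differentiableAt_const c).sub differentiableAt_id)
    (hg z)]
  simp [sub_eq_add_neg]

theorem iteratedDeriv_succ_const_sub_smul {h : 𝕜 → F} (hh : ContDiff 𝕜 ∞ h) (c x : 𝕜) (n : ℕ) :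
    iteratedDeriv (n + 1) (fun z => (c - z) • h z) x =
      (c - x) • iteratedDeriv (n + 1) h x - ((n : 𝕜) + 1) • iteratedDeriv n h x := by
  induction n generalizing h with
  | zero => simp [deriv_const_sub_smul (hh.differentiable (by simp))]
  | succ n ih =>
    have hh' : ContDiff 𝕜 ∞ (deriv h) := (contDiff_infty_iff_deriv.mp hh).2
    have hsmooth : ∀ {g : 𝕜 → F}, ContDiff 𝕜 ∞ g → ContDiffAt 𝕜 (n + 1) g x :=
      fun hg => (hg.of_le (by exact_mod_cast le_top)).contDiffAt
    rw [iteratedDeriv_succ', deriv_const_sub_smul (hh.differentiable (by simp)),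
      iteratedDeriv_fun_sub (hsmooth (by fun_prop)) (hsmooth hh), ih hh',
      ← iteratedDeriv_succ', ← iteratedDeriv_succ']
    push_cast
    module

end ConstSubSmul

theorem eq_sum_range_div_pow_of_recurrence {K : Type*} [Field K] {c : K} (hc : c ≠ 0)
    {a b : ℕ → K} (h0 : b 0 = c * a 0) (hsucc : ∀ r, b (r + 1) = c * a (r + 1) - a r) (r : ℕ) :
    a r = ∑ j ∈ range (r + 1), b j / c ^ (r - j + 1) := by
  induction r with
  | zero => simp [h0, hc]
  | succ r ih =>
    have hshift : ∑ j ∈ range (r + 1), b j / c ^ (r + 1 - j + 1) =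
        (∑ j ∈ range (r + 1), b j / c ^ (r - j + 1)) / c := by
      rw [sum_div]
      refine sum_congr rfl fun j hj => ?_
      rw [Nat.sub_add_comm (mem_range_succ_iff.mp hj), pow_succ, div_div]
    rw [sum_range_succ, hshift, ← ih, hsucc, Nat.sub_self, zero_add, pow_one]
    field_simp
    ring

noncomputable def genDickmanFun (κ : ℕ) (z : ℂ) : ℂ :=
  Complex.exp ((Real.eulerMascheroniConstant : ℂ) * z) / Complex.Gamma ((κ : ℂ) + 1 - z)

theorem genDickmanC_eq (r κ : ℕ) :
    genDickmanC r κ = iteratedDeriv r (genDickmanFun κ) 0 / r.factorial := rfl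

theorem contDiff_genDickmanFun (κ : ℕ) : ContDiff ℂ ∞ (genDickmanFun κ) := by
  refine Differentiable.contDiff ?_
  unfold genDickmanFun
  simp_rw [div_eq_mul_inv]
  exact (Complex.differentiable_exp.comp ((differentiable_const _).mul differentiable_id)).mul
    (Complex.differentiable_one_div_Gamma.comp ((differentiable_const _).sub differentiable_id))

theorem genDickmanFun_eq_mul_succ (κ : ℕ) (z : ℂ) :
    genDickmanFun κ z = ((κ : ℂ) + 1 - z) * genDickmanFun (κ + 1) z := by
  rw [genDickmanFun, genDickmanFun, div_eq_mul_inv, div_eq_mul_inv,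
    Complex.one_div_Gamma_eq_self_mul_one_div_Gamma_add_one]
  push_cast
  ring_nf

theorem genDickmanC_zero (κ : ℕ) : genDickmanC 0 κ = ((κ : ℂ) + 1) * genDickmanC 0 (κ + 1) := by
  simp [genDickmanC_eq, genDickmanFun_eq_mul_succ κ 0]

theorem genDickmanC_succ (κ r : ℕ) :
    genDickmanC (r + 1) κ =
      ((κ : ℂ) + 1) * genDickmanC (r + 1) (κ + 1) - genDickmanC r (κ + 1) := by
  have hfun : genDickmanFun κ = fun z => ((κ : ℂ) + 1 - z) • genDickmanFun (κ + 1) z :=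
    funext (genDickmanFun_eq_mul_succ κ)
  rw [genDickmanC_eq, hfun, iteratedDeriv_succ_const_sub_smul (contDiff_genDickmanFun _),
    genDickmanC_eq, genDickmanC_eq, Nat.factorial_succ]
  push_cast
  field_simp
  ring

theorem stmt_7 (κ : ℕ) (hκ : 1 ≤ κ) (r : ℕ) :
    genDickmanC r κ = ∑ j ∈ Finset.range (r + 1), genDickmanC j (κ - 1) / (κ : ℂ) ^ (r - j + 1) := by
  obtain ⟨k, rfl⟩ := Nat.exists_eq_add_of_le' hκ
  have hk : ((k + 1 : ℕ) : ℂ) ≠ 0 := Nat.cast_ne_zero.mpr k.succ_ne_zero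
  rw [Nat.add_sub_cancel]
  refine eq_sum_range_div_pow_of_recurrence (a := (genDickmanC · (k + 1)))
    (b := (genDickmanC · k)) hk ?_ (fun r => ?_) r
  · exact_mod_cast genDickmanC_zero k
  · exact_mod_cast genDickmanC_succ k r
end

section
/- For ℓ ≥ 1 and u ≥ ℓ, the iterated integral u^κ ∫_ℓ^u ∫_{ℓ−1}^{t_ℓ−1} ⋯ ∫_1^{t_2−1} ∏_{i=1}^ℓ (t_i − 1)^κ dt_1/t_1^{κ+1} ⋯ dt_ℓ/t_ℓ^{κ+1} equals the symmetric multiple integral (1/ℓ!) ∫_{s_1,…,s_ℓ ≥ 1, s_1+⋯+s_ℓ ≤ u} (u − (s_1+⋯+s_ℓ))^κ ds_1/s_1 ⋯ ds_ℓ/s_ℓ. -/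
open MeasureTheory

/-- The multiple integral `K_ℓ(u,κ)`, with the empty (`ℓ = 0`) case giving `u^κ` for `u ≥ 0`. -/
noncomputable def K (ℓ : ℕ) (u κ : ℝ) : ℝ :=
  (1 / (ℓ.factorial : ℝ)) *
    ∫ t in {t : Fin ℓ → ℝ | (∀ i, 1 ≤ t i) ∧ ∑ i, t i ≤ u}, (u - ∑ i, t i) ^ κ / ∏ i, t i

/-- The iterated integral `J ℓ u κ = ∫_ℓ^u (t-1)^κ t^{-κ-1} (J (ℓ-1) (t-1) κ) dt`. -/
noncomputable def J : ℕ → ℝ → ℝ → ℝ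
  | 0, _, _ => 1
  | (n + 1), u, κ => ∫ t in ((n : ℝ) + 1)..u, (t - 1) ^ κ / t ^ (κ + 1) * J n (t - 1) κ

/-! Write `I_n(a, u) = ∫_{σ_i ≥ a, Σ σ_i ≤ u} (u - Σ σ_i)^κ / ∏ σ_i` (`simplexIntegral`), so that
`K_n(u) = I_n(1, u) / n!`.
Up to null sets, the region of `I_{n+1}(1, u)` is the union of `n + 1` congruent pieces according to
which coordinate is smallest. On the piece where the first coordinate `t` is smallest, the others
range over `{σ_i ≥ t, Σ σ_i ≤ u - t}`, which is `t` times the region of `I_n(1, (u - t)/t)`, and the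
integrand is homogeneous; hence
`I_{n+1}(1, u) = (n + 1) ∫_1^{u/(n+1)} t^(κ-1) I_n(1, (u - t)/t) dt`.
The substitution `v = u/t` in the outer integral of `J_{n+1}(u)` gives the same recursion for
`u^κ J_{n+1}(u)`, and induction on `ℓ` concludes. -/

open Set Pointwise

section Symmetrization

variable {ι E : Type*} [Fintype ι] [NormedAddCommGroup E] [NormedSpace ℝ E]

theorem volume_setOf_apply_eq_apply {i j : ι} (hij : i ≠ j) :
    volume {x : ι → ℝ | x i = x j} = 0 := by
  let L : (ι → ℝ) →ₗ[ℝ] ℝ := LinearMap.proj (R := ℝ) (φ := fun _ : ι => ℝ) i - LinearMap.proj j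
  have hker : {x : ι → ℝ | x i = x j} = (LinearMap.ker L : Set (ι → ℝ)) := by
    ext x
    simp [L, sub_eq_zero]
  rw [hker]
  refine Measure.addHaar_submodule _ _ fun htop => ?_
  classical
  have hmem : Pi.single i 1 ∈ LinearMap.ker L := htop ▸ Submodule.mem_top
  simp [L, Pi.single_eq_of_ne' hij] at hmem

theorem measurableSet_setOf_forall_apply_le (i₀ : ι) :
    MeasurableSet {x : ι → ℝ | ∀ i, x i₀ ≤ x i} := by
  simp only [ofPred_forall]
  exact .iInter fun i => measurableSet_le (measurable_pi_apply i₀) (measurable_pi_apply i)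

theorem setIntegral_comp_perm (e : Equiv.Perm ι) (s : Set (ι → ℝ)) (f : (ι → ℝ) → E) :
    ∫ x in (· ∘ e) ⁻¹' s, f (x ∘ e) = ∫ x in s, f x :=
  (volume_preserving_arrowCongr' e.symm (MeasurableEquiv.refl ℝ) (.id _)).setIntegral_preimage_emb
    (MeasurableEquiv.arrowCongr' e.symm (.refl ℝ)).measurableEmbedding f s

/-- Splitting `S` according to which coordinate is minimal: the pieces overlap only on the null
sets `{x i = x j}`, and a transposition of coordinates carries each piece onto any other. -/
theorem setIntegral_eq_card_smul_setIntegral_inter_min {S : Set (ι → ℝ)}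
    {f : (ι → ℝ) → E} (hS : MeasurableSet S) (hS_perm : ∀ (e : Equiv.Perm ι) x, x ∘ e ∈ S ↔ x ∈ S)
    (hf_perm : ∀ (e : Equiv.Perm ι) x, f (x ∘ e) = f x) (hf : IntegrableOn f S) (i₀ : ι) :
    ∫ x in S, f x = Fintype.card ι • ∫ x in S ∩ {x | ∀ i, x i₀ ≤ x i}, f x := by
  classical
  set P : ι → Set (ι → ℝ) := fun j => S ∩ {x | ∀ i, x j ≤ x i} with hP
  have hP_meas (j : ι) : MeasurableSet (P j) := hS.inter (measurableSet_setOf_forall_apply_le j)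
  have hP_cover : ⋃ j, P j = S := by
    refine subset_antisymm (iUnion_subset fun j => inter_subset_left) fun x hx => ?_
    have : Nonempty ι := ⟨i₀⟩
    obtain ⟨j, hj⟩ := Finite.exists_min x
    exact mem_iUnion.2 ⟨j, hx, hj⟩
  have hP_disj : Pairwise (Function.onFun (AEDisjoint volume) P) := fun j k hjk =>
    measure_mono_null (fun x ⟨⟨_, hj⟩, ⟨_, hk⟩⟩ => le_antisymm (hj k) (hk j))
      (volume_setOf_apply_eq_apply hjk)
  have hP_swap (j : ι) : ∫ x in P j, f x = ∫ x in P i₀, f x := by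
    have hpre : (fun x : ι → ℝ => x ∘ Equiv.swap i₀ j) ⁻¹' P i₀ = P j := by
      ext x
      simp only [hP, mem_preimage, mem_inter_iff, mem_ofPred_eq, hS_perm, Function.comp_apply,
        Equiv.swap_apply_left]
      rw [(Equiv.swap i₀ j).forall_congr_right (q := fun i => x j ≤ x i)]
    rw [← setIntegral_comp_perm (Equiv.swap i₀ j) (P i₀), hpre]
    exact setIntegral_congr_fun (hP_meas j) fun x _ => (hf_perm _ x).symm
  calc ∫ x in S, f x = ∑' j, ∫ x in P j, f x := by
        rw [← hP_cover] at hf ⊢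
        exact integral_iUnion_ae (fun j => (hP_meas j).nullMeasurableSet) hP_disj hf
    _ = Fintype.card ι • ∫ x in P i₀, f x := by
        simp only [tsum_fintype, hP_swap, Finset.sum_const, Finset.card_univ]

end Symmetrization

section Slices

variable {α β E : Type*} [MeasurableSpace α] [MeasurableSpace β] [NormedAddCommGroup E]
  [NormedSpace ℝ E]

theorem setIntegral_prod_eq_integral_setIntegral_slice {μ : Measure α} {ν : Measure β}
    [SFinite μ] [SFinite ν] {s : Set (α × β)} (hs : MeasurableSet s) {f : α × β → E}
    (hf : IntegrableOn f s (μ.prod ν)) :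
    ∫ p in s, f p ∂μ.prod ν = ∫ x, ∫ y in Prod.mk x ⁻¹' s, f (x, y) ∂ν ∂μ := by
  rw [← integral_indicator hs, integral_prod _ ((integrable_indicator_iff hs).2 hf)]
  congr with x
  rw [← integral_indicator (measurable_prodMk_left hs)]
  rfl

theorem setIntegral_eq_integral_setIntegral_cons {n : ℕ} {S : Set (Fin (n + 1) → ℝ)}
    (hS : MeasurableSet S) {f : (Fin (n + 1) → ℝ) → E} (hf : IntegrableOn f S) :
    ∫ x in S, f x = ∫ t, ∫ τ in {τ : Fin n → ℝ | Fin.cons t τ ∈ S}, f (Fin.cons t τ) := by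
  let e := (MeasurableEquiv.piFinSuccAbove (fun _ : Fin (n + 1) => ℝ) 0).symm
  have he : MeasurePreserving e (volume.prod volume) volume :=
    (volume_preserving_piFinSuccAbove (fun _ : Fin (n + 1) => ℝ) 0).symm
  have he_apply (p : ℝ × (Fin n → ℝ)) : e p = Fin.cons p.1 p.2 := Fin.insertNth_zero' _ _
  rw [← he.setIntegral_preimage_emb e.measurableEmbedding,
    setIntegral_prod_eq_integral_setIntegral_slice (f := fun p => f (e p)) (e.measurable hS)
      ((he.integrableOn_comp_preimage e.measurableEmbedding).2 hf)]
  simp_rw [preimage_preimage, he_apply]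
  rfl

end Slices

section ChangeOfVariables

variable {E : Type*} [NormedAddCommGroup E] [NormedSpace ℝ E]

theorem image_const_div_Icc {c a b : ℝ} (hc : 0 < c) (ha : 0 < a) (hb : 0 < b) :
    (c / ·) '' Icc a b = Icc (c / b) (c / a) := by
  ext v
  constructor
  · rintro ⟨t, ⟨hat, htb⟩, rfl⟩
    exact ⟨div_le_div_of_nonneg_left hc.le (ha.trans_le hat) htb,
      div_le_div_of_nonneg_left hc.le ha hat⟩
  · rintro ⟨hbv, hva⟩
    have hv : 0 < v := (div_pos hc hb).trans_le hbv
    exact ⟨c / v, ⟨(le_div_comm₀ ha hv).2 hva, (div_le_comm₀ hv hb).2 hbv⟩,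
      div_div_cancel₀ hc.ne'⟩

theorem setIntegral_Icc_eq_setIntegral_Icc_comp_const_div {c a b : ℝ} (hc : 0 < c) (ha : 0 < a)
    (hb : 0 < b) (f : ℝ → E) :
    ∫ v in Icc (c / b) (c / a), f v = ∫ t in Icc a b, (c / t ^ 2) • f (c / t) := by
  have hderiv (t : ℝ) (ht : t ∈ Icc a b) :
      HasDerivWithinAt (c / ·) (-(c / t ^ 2)) (Icc a b) t := by
    have := ((hasDerivAt_inv (ha.trans_le ht.1).ne').const_mul c).hasDerivWithinAt (s := Icc a b)
    simpa [div_eq_mul_inv] using this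
  have hinj : InjOn (c / ·) (Icc a b) :=
    Function.Involutive.injective (f := (c / · : ℝ → ℝ)) (fun t => div_div_cancel₀ hc.ne') |>.injOn
  rw [← image_const_div_Icc hc ha hb,
    integral_image_eq_integral_abs_deriv_smul measurableSet_Icc hderiv hinj]
  refine setIntegral_congr_fun measurableSet_Icc fun t _ => ?_
  rw [abs_neg, abs_of_nonneg (by positivity)]

end ChangeOfVariables

def simplexAbove (n : ℕ) (a u : ℝ) : Set (Fin n → ℝ) := {σ | (∀ i, a ≤ σ i) ∧ ∑ i, σ i ≤ u}

noncomputable def simplexIntegral (n : ℕ) (a u κ : ℝ) : ℝ :=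
  ∫ σ in simplexAbove n a u, (u - ∑ i, σ i) ^ κ / ∏ i, σ i

section Simplex

variable {n : ℕ} {a u t : ℝ}

theorem measurableSet_simplexAbove : MeasurableSet (simplexAbove n a u) := by
  simp only [simplexAbove, ofPred_and, ofPred_forall]
  exact (MeasurableSet.iInter fun i => measurableSet_le measurable_const (measurable_pi_apply i))
    |>.inter (measurableSet_le (by fun_prop) measurable_const)

theorem simplexAbove_eq_empty (h : u < n * a) : simplexAbove n a u = ∅ := by
  refine eq_empty_of_forall_notMem fun σ ⟨ha, hu⟩ => ?_
  have : ∑ _i : Fin n, a ≤ ∑ i, σ i := Finset.sum_le_sum fun i _ => ha i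
  simp only [Finset.sum_const, Finset.card_univ, Fintype.card_fin, nsmul_eq_mul] at this
  linarith

theorem smul_simplexAbove (ht : 0 < t) :
    t • simplexAbove n a u = simplexAbove n (t * a) (t * u) := by
  ext σ
  rw [mem_smul_set_iff_inv_smul_mem₀ ht.ne']
  simp only [simplexAbove, mem_ofPred_eq, Pi.smul_apply, smul_eq_mul, ← Finset.mul_sum,
    inv_mul_le_iff₀ ht, le_inv_mul_iff₀ ht]

theorem simplexAbove_subset_pi (ha : 0 ≤ a) : simplexAbove n a u ⊆ univ.pi fun _ => Icc a u :=
  fun _ ⟨hσa, hσu⟩ => mem_univ_pi.2 fun i => ⟨hσa i,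
    (Finset.single_le_sum (fun j _ => ha.trans (hσa j)) (Finset.mem_univ i)).trans hσu⟩

theorem volume_simplexAbove_lt_top (ha : 0 ≤ a) : volume (simplexAbove n a u) < ⊤ := by
  refine (measure_mono (simplexAbove_subset_pi ha)).trans_lt ?_
  rw [volume_pi_pi]
  exact ENNReal.prod_lt_top fun _ _ => measure_Icc_lt_top

theorem comp_perm_mem_simplexAbove_iff (e : Equiv.Perm (Fin n)) (σ : Fin n → ℝ) :
    σ ∘ e ∈ simplexAbove n a u ↔ σ ∈ simplexAbove n a u := by
  simp only [simplexAbove, mem_ofPred_eq, Function.comp_apply, Equiv.sum_comp,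
    e.forall_congr_right (q := fun i => a ≤ σ i)]

theorem setOf_cons_mem_simplexAbove_inter_min (hat : a ≤ t) :
    {τ : Fin n → ℝ | Fin.cons t τ ∈ simplexAbove (n + 1) a u ∩ {σ | ∀ i, σ 0 ≤ σ i}}
      = simplexAbove n t (u - t) := by
  ext τ
  simp only [simplexAbove, mem_inter_iff, mem_ofPred_eq, Fin.forall_fin_succ, Fin.cons_zero,
    Fin.cons_succ, Fin.sum_cons, le_sub_iff_add_le']
  exact ⟨fun ⟨⟨_, hsum⟩, _, hτ⟩ => ⟨hτ, hsum⟩,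
    fun ⟨hτ, hsum⟩ => ⟨⟨⟨hat, fun i => hat.trans (hτ i)⟩, hsum⟩, le_rfl, hτ⟩⟩

end Simplex

section SimplexIntegral

variable {n : ℕ} {a u κ t : ℝ}

theorem integrableOn_rpow_sub_sum_div_prod (hκ : 0 ≤ κ) :
    IntegrableOn (fun σ : Fin n → ℝ => (u - ∑ i, σ i) ^ κ / ∏ i, σ i) (simplexAbove n 1 u) := by
  refine Measure.integrableOn_of_bounded (M := u ^ κ) (volume_simplexAbove_lt_top zero_le_one).ne
    (Measurable.aestronglyMeasurable (by fun_prop))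
    ((ae_restrict_iff' measurableSet_simplexAbove).2 (.of_forall ?_))
  rintro σ ⟨hσ1, hσu⟩
  have hsum : 0 ≤ ∑ i, σ i := Finset.sum_nonneg fun i _ => zero_le_one.trans (hσ1 i)
  have hprod : 1 ≤ ∏ i, σ i := Finset.one_le_prod fun i _ => hσ1 i
  have hpow : 0 ≤ (u - ∑ i, σ i) ^ κ := Real.rpow_nonneg (sub_nonneg.2 hσu) κ
  rw [Real.norm_of_nonneg (div_nonneg hpow (zero_le_one.trans hprod))]
  calc (u - ∑ i, σ i) ^ κ / ∏ i, σ i ≤ (u - ∑ i, σ i) ^ κ := div_le_self hpow hprod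
    _ ≤ u ^ κ := Real.rpow_le_rpow (sub_nonneg.2 hσu) (by linarith) hκ

theorem simplexIntegral_zero (hu : 0 ≤ u) : simplexIntegral 0 a u κ = u ^ κ := by
  have huniv : simplexAbove 0 a u = univ := by simp [simplexAbove, hu]
  simp [simplexIntegral, huniv, measureReal_def, volume_pi]

theorem simplexIntegral_mul (ht : 0 < t) :
    simplexIntegral n (t * a) (t * u) κ = t ^ κ * simplexIntegral n a u κ := by
  have key := Measure.setIntegral_comp_smul_of_pos volume
    (fun σ : Fin n → ℝ => (t * u - ∑ i, σ i) ^ κ / ∏ i, σ i) (simplexAbove n a u) ht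
  have hscale (x : Fin n → ℝ) (hx : x ∈ simplexAbove n a u) :
      (t * u - ∑ i, (t • x) i) ^ κ / ∏ i, (t • x) i
        = (t ^ n)⁻¹ * (t ^ κ * ((u - ∑ i, x i) ^ κ / ∏ i, x i)) := by
    simp only [Pi.smul_apply, smul_eq_mul, ← Finset.mul_sum, ← mul_sub, Finset.prod_mul_distrib,
      Finset.prod_const, Finset.card_univ, Fintype.card_fin,
      Real.mul_rpow ht.le (sub_nonneg.2 hx.2)]
    ring
  rw [setIntegral_congr_fun measurableSet_simplexAbove hscale, integral_const_mul,
    integral_const_mul, smul_simplexAbove ht, Module.finrank_fin_fun, smul_eq_mul] at key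
  exact (mul_left_cancel₀ (by positivity) key).symm

theorem integral_slice_simplexAbove_inter_min (t : ℝ) :
    ∫ τ in {τ : Fin n → ℝ | Fin.cons t τ ∈ simplexAbove (n + 1) a u ∩ {σ | ∀ i, σ 0 ≤ σ i}},
        (u - ∑ i, (Fin.cons t τ : Fin (n + 1) → ℝ) i) ^ κ / ∏ i, (Fin.cons t τ : Fin (n + 1) → ℝ) i
      = (Icc a (u / (n + 1))).indicator (fun t => t⁻¹ * simplexIntegral n t (u - t) κ) t := by
  rcases lt_or_ge t a with hta | hat
  · have hempty : {τ : Fin n → ℝ | Fin.cons t τ ∈ simplexAbove (n + 1) a u ∩ {σ | ∀ i, σ 0 ≤ σ i}}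
        = ∅ := eq_empty_of_forall_notMem fun τ hτ => hta.not_ge (hτ.1.1 0)
    rw [hempty, indicator_of_notMem fun h => hta.not_ge h.1, Measure.restrict_empty,
      integral_zero_measure]
  rw [setOf_cons_mem_simplexAbove_inter_min hat]
  by_cases htu : t ≤ u / (n + 1)
  · rw [indicator_of_mem (show t ∈ Icc a (u / (n + 1)) from ⟨hat, htu⟩), simplexIntegral,
      ← integral_const_mul]
    refine setIntegral_congr_fun measurableSet_simplexAbove fun τ _ => ?_
    simp only [Fin.sum_cons, Fin.prod_cons, sub_add_eq_sub_sub]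
    ring
  · have hut : u - t < n * t := by
      rw [not_le, div_lt_iff₀ (by positivity)] at htu
      linarith
    rw [indicator_of_notMem fun h => htu h.2, simplexAbove_eq_empty hut, Measure.restrict_empty,
      integral_zero_measure]

theorem simplexIntegral_succ (hκ : 0 ≤ κ) :
    simplexIntegral (n + 1) 1 u κ
      = (n + 1) * ∫ t in Icc 1 (u / (n + 1)), t⁻¹ * simplexIntegral n t (u - t) κ := by
  have hS := (measurableSet_simplexAbove (n := n + 1) (a := 1) (u := u)).inter
    (measurableSet_setOf_forall_apply_le 0)
  have hf := integrableOn_rpow_sub_sum_div_prod (n := n + 1) (u := u) hκ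
  rw [simplexIntegral, setIntegral_eq_card_smul_setIntegral_inter_min measurableSet_simplexAbove
    comp_perm_mem_simplexAbove_iff
    (fun e σ => by simp only [Function.comp_apply, Equiv.sum_comp, Equiv.prod_comp]) hf 0,
    setIntegral_eq_integral_setIntegral_cons hS (hf.mono_set inter_subset_left)]
  simp_rw [integral_slice_simplexAbove_inter_min, integral_indicator measurableSet_Icc]
  simp [nsmul_eq_mul]

end SimplexIntegral

theorem K_eq_inv_factorial_mul_simplexIntegral (n : ℕ) (u κ : ℝ) :
    K n u κ = (n.factorial : ℝ)⁻¹ * simplexIntegral n 1 u κ := by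
  rw [K, one_div]
  rfl

theorem K_succ (n : ℕ) (u κ : ℝ) (hκ : 0 ≤ κ) :
    K (n + 1) u κ = ∫ t in Icc 1 (u / (n + 1)), t⁻¹ * (t ^ κ * K n ((u - t) / t) κ) := by
  have hfactorial : ((n + 1).factorial : ℝ)⁻¹ * (n + 1) = (n.factorial : ℝ)⁻¹ := by
    rw [Nat.factorial_succ, Nat.cast_mul, Nat.cast_succ]
    field_simp
  rw [K_eq_inv_factorial_mul_simplexIntegral, simplexIntegral_succ hκ, ← mul_assoc, hfactorial,
    ← integral_const_mul]
  refine setIntegral_congr_fun measurableSet_Icc fun t ht => ?_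
  have ht0 : 0 < t := one_pos.trans_le ht.1
  have hsplit :
      simplexIntegral n t (u - t) κ = simplexIntegral n (t * 1) (t * ((u - t) / t)) κ := by
    rw [mul_one, mul_div_cancel₀ _ ht0.ne']
  rw [hsplit, simplexIntegral_mul ht0, K_eq_inv_factorial_mul_simplexIntegral]
  ring

theorem pow_mul_J_succ (n : ℕ) {u : ℝ} (κ : ℝ) (hu : (n : ℝ) + 1 ≤ u) :
    u ^ κ * J (n + 1) u κ
      = ∫ t in Icc 1 (u / (n + 1)), t⁻¹ * (t ^ κ * (((u - t) / t) ^ κ * J n ((u - t) / t) κ)) := by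
  have hu0 : 0 < u := by linarith [(n.cast_nonneg : (0 : ℝ) ≤ n)]
  have hIcc : Icc ((n : ℝ) + 1) u = Icc (u / (u / (n + 1))) (u / 1) := by
    rw [div_div_cancel₀ hu0.ne', div_one]
  rw [J, intervalIntegral.integral_of_le hu, ← integral_Icc_eq_integral_Ioc, hIcc,
    setIntegral_Icc_eq_setIntegral_Icc_comp_const_div hu0 one_pos (by positivity),
    ← integral_const_mul]
  refine setIntegral_congr_fun measurableSet_Icc fun t ht => ?_
  have ht0 : 0 < t := one_pos.trans_le ht.1
  have hsub : u / t - 1 = (u - t) / t := by field_simp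
  rw [hsub, smul_eq_mul, Real.div_rpow hu0.le ht0.le, Real.rpow_add_one hu0.ne',
    Real.rpow_add_one ht0.ne']
  field_simp

theorem stmt_11_general (ℓ : ℕ) (κ : ℝ) (hκ : 0 ≤ κ) (u : ℝ) (hu : (ℓ : ℝ) ≤ u) :
    u ^ κ * J ℓ u κ = K ℓ u κ := by
  induction ℓ generalizing u with
  | zero =>
    rw [J, mul_one, K_eq_inv_factorial_mul_simplexIntegral,
      simplexIntegral_zero (by simpa using hu)]
    simp
  | succ n ih =>
    rw [Nat.cast_succ] at hu
    rw [pow_mul_J_succ n κ hu, K_succ n u κ hκ]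
    refine setIntegral_congr_fun measurableSet_Icc fun t ⟨ht1, htu⟩ => ?_
    have ht0 : 0 < t := one_pos.trans_le ht1
    have hn : (n : ℝ) ≤ (u - t) / t := by
      rw [le_div_iff₀ ht0]
      rw [le_div_iff₀ (by positivity)] at htu
      linarith
    rw [ih _ hn]

theorem stmt_11 (ℓ : ℕ) (hℓ : 1 ≤ ℓ) (κ : ℝ) (hκ : 0 ≤ κ) (u : ℝ) (hu : (ℓ : ℝ) ≤ u) :
    u ^ κ * J ℓ u κ = K ℓ u κ :=
  stmt_11_general ℓ κ hκ u hu
end
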